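/- Let T > 0, A > 0, k > 0, γ > 0, η ≥ 0 and b, σ ∈ ℝ (constant drift and volatility). Define θ₁(t,s) = s + b·(T−t), θ₂(t) = −η − (γσ²/2)·(T−t), θ₀(t) = (2A/(k+γ))·(1 − (k/γ)·log(1+γ/k) − kη)·(T−t) − (kγA/(k+γ))·σ²·(T−t)²/2, and u̲(t,s,q,x) = −exp(−γ·(x + θ₀(t) + q·θ₁(t,s) + q²·θ₂(t))) on [0,T] × ℝ × ℤ × ℝ. Then: (i) θ₁ satisfies ∂_t θ₁ + b·∂_s θ₁ + (σ²/2)·∂_{ss} θ₁ = 0, θ₁(T,s) = s and ∂_s θ₁ ≡ 1; (ii) for every (t,s,q,x), the ask functional δ ↦ A·e^{−kδ}·(u̲(t,s,q−1,x+s+δ) − u̲(t,s,q,x)) and the bid functional δ ↦ A·e^{−kδ}·(u̲(t,s,q+1,x−s+δ) − u̲(t,s,q,x)) attain their suprema over δ ∈ ℝ at the unique points δ±* = (1/γ)·log(1+γ/k) + η + (γσ²/2)·(T−t) ± (b·(T−t) − q·(2η + γσ²·(T−t))); (iii) the optimal spread is ψ* = δ⁺* + δ⁻* = (2/γ)·log(1+γ/k)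 + 2η + γσ²·(T−t) and the indifference price is r* = s + (δ⁺* − δ⁻*)/2 = s + b·(T−t) − q·(2η + γσ²·(T−t)); (iv) HJB(u̲)(t,s,q,x) ≥ 0 on [0,T] × ℝ × ℤ × ℝ and u̲(T,s,q,x) = −exp(−γ·(x + q·s − η·q²)). -/

import Mathlib

/-!
For the exponential ansatz `u = -exp (-γ (x + θ₀ + q θ₁ + q² θ₂))`, a fill at offset `δ` multiplies
`-u` by `1 - exp (-γ (δ - c))`, where `c` is the break-even offset, so each quote functional is
`A (-u) e^{-kδ} (1 - e^{-γ(δ - c)})`. It is uniquely maximised at `δ* = c + log (1 + γ/k) / γ`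
(writing `δ = δ* + w`, this amounts to `k (1 - e^{-γw}) < k γ w < γ (e^{kw} - 1)`), with value
`A (-u) γ/(k+γ) e^{-kδ*}`. Since `θ₁` solves the backward equation with `∂ₛθ₁ = 1` and
`θ₂' = γσ²/2`, the inventory terms cancel in the generator, which reduces to `-γ θ₀' u`; and `θ₀`
is chosen so that the whole HJB expression becomes
`(-u) Aγ/(k+γ) (e^{-kδ⁺} + e^{-kδ⁻} - (2 - k (δ⁺ + δ⁻)))`, which is nonnegative by `1 + z ≤ eᶻ`.
-/

/-- The Hamilton–Jacobi–Bellman expression of a value function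
`u : (t,s,q,x) ↦ u t s q x` for the market-making problem with intensities
`A·e^{−kδ}` and mid-price diffusion coefficients `b`, `σ`. -/
noncomputable def HJB (A k : ℝ) (b σ : ℝ → ℝ → ℝ) (u : ℝ → ℝ → ℤ → ℝ → ℝ)
    (t s : ℝ) (q : ℤ) (x : ℝ) : ℝ :=
  deriv (fun τ => u τ s q x) t
    + b t s * deriv (fun y => u t y q x) s
    + 1 / 2 * (σ t s) ^ 2 * deriv (deriv (fun y => u t y q x)) s
    + (⨆ δ : ℝ, A * Real.exp (-(k * δ)) * (u t s (q - 1) (x + s + δ) - u t s q x))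
    + (⨆ δ : ℝ, A * Real.exp (-(k * δ)) * (u t s (q + 1) (x - s + δ) - u t s q x))

open Real

lemma mul_one_sub_exp_neg_lt_mul_exp_sub_one {k γ w : ℝ} (hk : 0 < k) (hγ : 0 < γ)
    (hw : w ≠ 0) : k * (1 - exp (-(γ * w))) < γ * (exp (k * w) - 1) := by
  have hγw := add_one_lt_exp (neg_ne_zero.2 (mul_ne_zero hγ.ne' hw))
  have hkw := add_one_lt_exp (mul_ne_zero hk.ne' hw)
  calc k * (1 - exp (-(γ * w))) < k * (γ * w) := by gcongr; linarith
    _ = γ * (k * w) := by ring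
    _ < γ * (exp (k * w) - 1) := by gcongr; linarith

noncomputable def quoteGain (k γ c δ : ℝ) : ℝ := exp (-(k * δ)) * (1 - exp (-(γ * (δ - c))))

noncomputable def optimalQuote (k γ c : ℝ) : ℝ := c + log (1 + γ / k) / γ

section QuoteGain

variable {k γ : ℝ} (c : ℝ)

lemma exp_neg_mul_optimalQuote_sub (hk : 0 < k) (hγ : 0 < γ) :
    exp (-(γ * (optimalQuote k γ c - c))) = k / (k + γ) := by
  have h : 0 < 1 + γ / k := by positivity
  rw [optimalQuote, add_sub_cancel_left, mul_div_cancel₀ _ hγ.ne', exp_neg, exp_log h]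
  field_simp

lemma quoteGain_optimalQuote (hk : 0 < k) (hγ : 0 < γ) :
    quoteGain k γ c (optimalQuote k γ c) = γ / (k + γ) * exp (-(k * optimalQuote k γ c)) := by
  rw [quoteGain, exp_neg_mul_optimalQuote_sub c hk hγ]
  field_simp
  ring

lemma quoteGain_lt_quoteGain_optimalQuote (hk : 0 < k) (hγ : 0 < γ) {δ : ℝ}
    (hδ : δ ≠ optimalQuote k γ c) :
    quoteGain k γ c δ < quoteGain k γ c (optimalQuote k γ c) := by
  obtain ⟨w, hw, rfl⟩ : ∃ w ≠ 0, δ = optimalQuote k γ c + w :=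
    ⟨δ - optimalQuote k γ c, sub_ne_zero.2 hδ, by ring⟩
  have key := mul_one_sub_exp_neg_lt_mul_exp_sub_one hk hγ hw
  have hsplit : quoteGain k γ c (optimalQuote k γ c + w)
      = exp (-(k * optimalQuote k γ c)) * (exp (k * w))⁻¹
        * (1 - k / (k + γ) * exp (-(γ * w))) := by
    rw [quoteGain, ← exp_neg_mul_optimalQuote_sub c hk hγ, ← exp_neg, ← exp_add, ← exp_add]
    ring_nf
  rw [hsplit, quoteGain_optimalQuote c hk hγ, mul_comm (γ / (k + γ)), mul_assoc]
  gcongr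
  rw [inv_mul_lt_iff₀ (exp_pos _)]
  have : 0 < k + γ := by positivity
  field_simp
  linarith

lemma ciSup_mul_quoteGain {a : ℝ} (ha : 0 ≤ a) (hk : 0 < k) (hγ : 0 < γ) :
    ⨆ δ, a * quoteGain k γ c δ = a * quoteGain k γ c (optimalQuote k γ c) := by
  refine IsGreatest.isLUB ⟨Set.mem_range_self _, ?_⟩ |>.ciSup_eq
  rintro _ ⟨δ, rfl⟩
  obtain rfl | hδ := eq_or_ne δ (optimalQuote k γ c)
  · rfl
  · exact mul_le_mul_of_nonneg_left (quoteGain_lt_quoteGain_optimalQuote c hk hγ hδ).le ha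

end QuoteGain

noncomputable def caraValue (γ : ℝ) (θ₀ : ℝ → ℝ) (θ₁ : ℝ → ℝ → ℝ) (θ₂ : ℝ → ℝ)
    (t s : ℝ) (q : ℤ) (x : ℝ) : ℝ :=
  -exp (-(γ * (x + θ₀ t + q * θ₁ t s + q ^ 2 * θ₂ t)))

noncomputable def askGain (A k : ℝ) (u : ℝ → ℝ → ℤ → ℝ → ℝ) (t s : ℝ) (q : ℤ) (x δ : ℝ) : ℝ :=
  A * exp (-(k * δ)) * (u t s (q - 1) (x + s + δ) - u t s q x)

noncomputable def bidGain (A k : ℝ) (u : ℝ → ℝ → ℤ → ℝ → ℝ) (t s : ℝ) (q : ℤ) (x δ : ℝ) : ℝ :=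
  A * exp (-(k * δ)) * (u t s (q + 1) (x - s + δ) - u t s q x)

lemma HJB_const_coeff_eq (A k b σ : ℝ) (u : ℝ → ℝ → ℤ → ℝ → ℝ) (t s : ℝ) (q : ℤ) (x : ℝ) :
    HJB A k (fun _ _ => b) (fun _ _ => σ) u t s q x
      = deriv (fun τ => u τ s q x) t + b * deriv (fun y => u t y q x) s
          + 1 / 2 * σ ^ 2 * deriv (deriv (fun y => u t y q x)) s
        + (⨆ δ, askGain A k u t s q x δ) + ⨆ δ, bidGain A k u t s q x δ :=
  rfl

-- the ask (bid) offset at which a fill leaves `caraValue` unchanged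
def askBreakEven (θ₁ : ℝ → ℝ → ℝ) (θ₂ : ℝ → ℝ) (t s : ℝ) (q : ℤ) : ℝ :=
  θ₁ t s - s + (2 * q - 1) * θ₂ t

def bidBreakEven (θ₁ : ℝ → ℝ → ℝ) (θ₂ : ℝ → ℝ) (t s : ℝ) (q : ℤ) : ℝ :=
  s - θ₁ t s - (2 * q + 1) * θ₂ t

section CaraValue

variable {γ : ℝ} {θ₀ θ₂ : ℝ → ℝ} {θ₁ : ℝ → ℝ → ℝ} {t s : ℝ} {q : ℤ} {x : ℝ}

lemma caraValue_neg : caraValue γ θ₀ θ₁ θ₂ t s q x < 0 :=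
  neg_neg_of_pos (exp_pos _)

lemma caraValue_add_sub (n : ℤ) (y : ℝ) :
    caraValue γ θ₀ θ₁ θ₂ t s (q + n) (x + y) - caraValue γ θ₀ θ₁ θ₂ t s q x
      = -caraValue γ θ₀ θ₁ θ₂ t s q x
        * (1 - exp (-(γ * (y + n * θ₁ t s + (2 * q * n + n ^ 2) * θ₂ t)))) := by
  simp only [caraValue, neg_neg, mul_sub, mul_one, ← exp_add]
  push_cast
  ring_nf

lemma askGain_caraValue (A k δ : ℝ) :
    askGain A k (caraValue γ θ₀ θ₁ θ₂) t s q x δ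
      = A * -caraValue γ θ₀ θ₁ θ₂ t s q x * quoteGain k γ (askBreakEven θ₁ θ₂ t s q) δ := by
  rw [askGain, sub_eq_add_neg (q : ℤ), add_assoc x, caraValue_add_sub, quoteGain, askBreakEven]
  push_cast
  ring_nf

lemma bidGain_caraValue (A k δ : ℝ) :
    bidGain A k (caraValue γ θ₀ θ₁ θ₂) t s q x δ
      = A * -caraValue γ θ₀ θ₁ θ₂ t s q x * quoteGain k γ (bidBreakEven θ₁ θ₂ t s q) δ := by
  rw [bidGain, sub_eq_add_neg x, add_assoc, caraValue_add_sub, quoteGain, bidBreakEven]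
  push_cast
  ring_nf

variable {A k : ℝ}

lemma askGain_caraValue_lt (hA : 0 < A) (hk : 0 < k) (hγ : 0 < γ) {δ : ℝ}
    (hδ : δ ≠ optimalQuote k γ (askBreakEven θ₁ θ₂ t s q)) :
    askGain A k (caraValue γ θ₀ θ₁ θ₂) t s q x δ
      < askGain A k (caraValue γ θ₀ θ₁ θ₂) t s q x
          (optimalQuote k γ (askBreakEven θ₁ θ₂ t s q)) := by
  rw [askGain_caraValue, askGain_caraValue]
  exact mul_lt_mul_of_pos_left (quoteGain_lt_quoteGain_optimalQuote _ hk hγ hδ)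
    (mul_pos hA (neg_pos.2 caraValue_neg))

lemma bidGain_caraValue_lt (hA : 0 < A) (hk : 0 < k) (hγ : 0 < γ) {δ : ℝ}
    (hδ : δ ≠ optimalQuote k γ (bidBreakEven θ₁ θ₂ t s q)) :
    bidGain A k (caraValue γ θ₀ θ₁ θ₂) t s q x δ
      < bidGain A k (caraValue γ θ₀ θ₁ θ₂) t s q x
          (optimalQuote k γ (bidBreakEven θ₁ θ₂ t s q)) := by
  rw [bidGain_caraValue, bidGain_caraValue]
  exact mul_lt_mul_of_pos_left (quoteGain_lt_quoteGain_optimalQuote _ hk hγ hδ)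
    (mul_pos hA (neg_pos.2 caraValue_neg))

lemma ciSup_askGain_caraValue (hA : 0 < A) (hk : 0 < k) (hγ : 0 < γ) :
    ⨆ δ, askGain A k (caraValue γ θ₀ θ₁ θ₂) t s q x δ
      = A * -caraValue γ θ₀ θ₁ θ₂ t s q x * (γ / (k + γ))
        * exp (-(k * optimalQuote k γ (askBreakEven θ₁ θ₂ t s q))) := by
  simp_rw [askGain_caraValue]
  rw [ciSup_mul_quoteGain _ (mul_pos hA (neg_pos.2 caraValue_neg)).le hk hγ,
    quoteGain_optimalQuote _ hk hγ]
  ring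

lemma ciSup_bidGain_caraValue (hA : 0 < A) (hk : 0 < k) (hγ : 0 < γ) :
    ⨆ δ, bidGain A k (caraValue γ θ₀ θ₁ θ₂) t s q x δ
      = A * -caraValue γ θ₀ θ₁ θ₂ t s q x * (γ / (k + γ))
        * exp (-(k * optimalQuote k γ (bidBreakEven θ₁ θ₂ t s q))) := by
  simp_rw [bidGain_caraValue]
  rw [ciSup_mul_quoteGain _ (mul_pos hA (neg_pos.2 caraValue_neg)).le hk hγ,
    quoteGain_optimalQuote _ hk hγ]
  ring

lemma hasDerivAt_caraValue_time {θ₀' θ₁' θ₂' : ℝ} (h₀ : HasDerivAt θ₀ θ₀' t)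
    (h₁ : HasDerivAt (fun τ => θ₁ τ s) θ₁' t) (h₂ : HasDerivAt θ₂ θ₂' t) :
    HasDerivAt (fun τ => caraValue γ θ₀ θ₁ θ₂ τ s q x)
      (-γ * (θ₀' + q * θ₁' + q ^ 2 * θ₂') * caraValue γ θ₀ θ₁ θ₂ t s q x) t := by
  have hexp := ((((h₀.const_add x).fun_add (h₁.const_mul (q : ℝ))).fun_add
    (h₂.const_mul ((q : ℝ) ^ 2))).const_mul γ).fun_neg.exp.fun_neg
  exact hexp.congr_deriv (by unfold caraValue; ring)

lemma hasDerivAt_caraValue_space {θ₁' y : ℝ} (h₁ : HasDerivAt (θ₁ t) θ₁' y) :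
    HasDerivAt (fun y => caraValue γ θ₀ θ₁ θ₂ t y q x)
      (-γ * (q * θ₁') * caraValue γ θ₀ θ₁ θ₂ t y q x) y := by
  have hexp := ((h₁.const_mul (q : ℝ)).const_add (x + θ₀ t) |>.add_const (q ^ 2 * θ₂ t)
    |>.const_mul γ).fun_neg.exp.fun_neg
  exact hexp.congr_deriv (by unfold caraValue; ring)

lemma generator_caraValue {θ₀' θ₁' θ₂' : ℝ} (h₀ : HasDerivAt θ₀ θ₀' t)
    (h₁ : HasDerivAt (fun τ => θ₁ τ s) θ₁' t) (h₁s : ∀ y, HasDerivAt (θ₁ t) 1 y)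
    (h₂ : HasDerivAt θ₂ θ₂' t) (b σ : ℝ) :
    deriv (fun τ => caraValue γ θ₀ θ₁ θ₂ τ s q x) t
        + b * deriv (fun y => caraValue γ θ₀ θ₁ θ₂ t y q x) s
        + 1 / 2 * σ ^ 2 * deriv (deriv (fun y => caraValue γ θ₀ θ₁ θ₂ t y q x)) s
      = -γ * (θ₀' + q * (θ₁' + b) + q ^ 2 * (θ₂' - γ * σ ^ 2 / 2))
        * caraValue γ θ₀ θ₁ θ₂ t s q x := by
  have hs : deriv (fun y => caraValue γ θ₀ θ₁ θ₂ t y q x)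
      = fun y => -γ * q * caraValue γ θ₀ θ₁ θ₂ t y q x := by
    ext y
    rw [(hasDerivAt_caraValue_space (h₁s y)).deriv, mul_one]
  rw [(hasDerivAt_caraValue_time h₀ h₁ h₂).deriv, hs,
    ((hasDerivAt_caraValue_space (h₁s s)).const_mul (-γ * q)).deriv]
  ring

end CaraValue

namespace ABM

noncomputable def θ₁ (T b t s : ℝ) : ℝ := s + b * (T - t)

noncomputable def θ₂ (T γ η σ t : ℝ) : ℝ := -η - γ * σ ^ 2 / 2 * (T - t)

noncomputable def θ₀ (T A k γ η σ t : ℝ) : ℝ :=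
  2 * A / (k + γ) * (1 - k / γ * log (1 + γ / k) - k * η) * (T - t)
    - k * γ * A / (k + γ) * σ ^ 2 * (T - t) ^ 2 / 2

noncomputable def askQuote (T k γ η b σ t : ℝ) (q : ℤ) : ℝ :=
  1 / γ * log (1 + γ / k) + η + γ * σ ^ 2 / 2 * (T - t)
    + (b * (T - t) - q * (2 * η + γ * σ ^ 2 * (T - t)))

noncomputable def bidQuote (T k γ η b σ t : ℝ) (q : ℤ) : ℝ :=
  1 / γ * log (1 + γ / k) + η + γ * σ ^ 2 / 2 * (T - t)
    - (b * (T - t) - q * (2 * η + γ * σ ^ 2 * (T - t)))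

variable {T A k γ η b σ : ℝ}

lemma hasDerivAt_θ₁_time (s t : ℝ) : HasDerivAt (fun τ => θ₁ T b τ s) (-b) t :=
  ((((hasDerivAt_id' t).const_sub T).const_mul b).const_add s).congr_deriv (by ring)

lemma hasDerivAt_θ₁_space (t s : ℝ) : HasDerivAt (θ₁ T b t) 1 s :=
  (hasDerivAt_id s).add_const _

lemma θ₁_backward_equation (t s : ℝ) :
    deriv (fun τ => θ₁ T b τ s) t + b * deriv (θ₁ T b t) s
      + σ ^ 2 / 2 * deriv (deriv (θ₁ T b t)) s = 0 := by
  have hs : deriv (θ₁ T b t) = fun _ => 1 := funext fun y => (hasDerivAt_θ₁_space t y).deriv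
  rw [(hasDerivAt_θ₁_time s t).deriv, hs, deriv_const]
  ring

lemma hasDerivAt_θ₂ (t : ℝ) : HasDerivAt (θ₂ T γ η σ) (γ * σ ^ 2 / 2) t :=
  ((((hasDerivAt_id' t).const_sub T).const_mul (γ * σ ^ 2 / 2)).const_sub (-η)).congr_deriv
    (by ring)

lemma hasDerivAt_θ₀ (t : ℝ) :
    HasDerivAt (θ₀ T A k γ η σ)
      (-(A / (k + γ) * (2 - k * (2 / γ * log (1 + γ / k) + 2 * η + γ * σ ^ 2 * (T - t))))) t := by
  have h := (hasDerivAt_id' t).const_sub T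
  exact ((h.const_mul _).fun_sub (((h.pow 2).const_mul _).div_const 2)).congr_deriv (by ring)

lemma optimalQuote_askBreakEven (t s : ℝ) (q : ℤ) :
    optimalQuote k γ (askBreakEven (θ₁ T b) (θ₂ T γ η σ) t s q) = askQuote T k γ η b σ t q := by
  simp only [optimalQuote, askBreakEven, θ₁, θ₂, askQuote]
  ring

lemma optimalQuote_bidBreakEven (t s : ℝ) (q : ℤ) :
    optimalQuote k γ (bidBreakEven (θ₁ T b) (θ₂ T γ η σ) t s q) = bidQuote T k γ η b σ t q := by
  simp only [optimalQuote, bidBreakEven, θ₁, θ₂, bidQuote]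
  ring

lemma askQuote_add_bidQuote (t : ℝ) (q : ℤ) :
    askQuote T k γ η b σ t q + bidQuote T k γ η b σ t q
      = 2 / γ * log (1 + γ / k) + 2 * η + γ * σ ^ 2 * (T - t) := by
  simp only [askQuote, bidQuote]
  ring

lemma askGain_caraValue_lt_askQuote (hA : 0 < A) (hk : 0 < k) (hγ : 0 < γ) {t s : ℝ} {q : ℤ}
    {x δ : ℝ} (hδ : δ ≠ askQuote T k γ η b σ t q) :
    askGain A k (caraValue γ (θ₀ T A k γ η σ) (θ₁ T b) (θ₂ T γ η σ)) t s q x δ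
      < askGain A k (caraValue γ (θ₀ T A k γ η σ) (θ₁ T b) (θ₂ T γ η σ)) t s q x
          (askQuote T k γ η b σ t q) := by
  rw [← optimalQuote_askBreakEven t s q] at hδ ⊢
  exact askGain_caraValue_lt hA hk hγ hδ

lemma bidGain_caraValue_lt_bidQuote (hA : 0 < A) (hk : 0 < k) (hγ : 0 < γ) {t s : ℝ} {q : ℤ}
    {x δ : ℝ} (hδ : δ ≠ bidQuote T k γ η b σ t q) :
    bidGain A k (caraValue γ (θ₀ T A k γ η σ) (θ₁ T b) (θ₂ T γ η σ)) t s q x δ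
      < bidGain A k (caraValue γ (θ₀ T A k γ η σ) (θ₁ T b) (θ₂ T γ η σ)) t s q x
          (bidQuote T k γ η b σ t q) := by
  rw [← optimalQuote_bidBreakEven t s q] at hδ ⊢
  exact bidGain_caraValue_lt hA hk hγ hδ

lemma HJB_caraValue_eq (hA : 0 < A) (hk : 0 < k) (hγ : 0 < γ) (t s : ℝ) (q : ℤ) (x : ℝ) :
    HJB A k (fun _ _ => b) (fun _ _ => σ)
        (caraValue γ (θ₀ T A k γ η σ) (θ₁ T b) (θ₂ T γ η σ)) t s q x
      = -caraValue γ (θ₀ T A k γ η σ) (θ₁ T b) (θ₂ T γ η σ) t s q x * (A * γ / (k + γ))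
        * (exp (-(k * askQuote T k γ η b σ t q)) + exp (-(k * bidQuote T k γ η b σ t q))
          - (2 - k * (askQuote T k γ η b σ t q + bidQuote T k γ η b σ t q))) := by
  rw [HJB_const_coeff_eq, generator_caraValue (hasDerivAt_θ₀ t) (hasDerivAt_θ₁_time s t)
      (hasDerivAt_θ₁_space t) (hasDerivAt_θ₂ t), ciSup_askGain_caraValue hA hk hγ,
    ciSup_bidGain_caraValue hA hk hγ, optimalQuote_askBreakEven, optimalQuote_bidBreakEven,
    askQuote_add_bidQuote]
  ring

lemma HJB_caraValue_nonneg (hA : 0 < A) (hk : 0 < k) (hγ : 0 < γ) (t s : ℝ) (q : ℤ) (x : ℝ) :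
    0 ≤ HJB A k (fun _ _ => b) (fun _ _ => σ)
      (caraValue γ (θ₀ T A k γ η σ) (θ₁ T b) (θ₂ T γ η σ)) t s q x := by
  rw [HJB_caraValue_eq hA hk hγ]
  have hask := add_one_le_exp (-(k * askQuote T k γ η b σ t q))
  have hbid := add_one_le_exp (-(k * bidQuote T k γ η b σ t q))
  exact mul_nonneg (mul_nonneg (neg_nonneg.2 caraValue_neg.le) (by positivity)) (by linarith)

lemma caraValue_terminal (s : ℝ) (q : ℤ) (x : ℝ) :
    caraValue γ (θ₀ T A k γ η σ) (θ₁ T b) (θ₂ T γ η σ) T s q x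
      = -exp (-(γ * (x + q * s - η * q ^ 2))) := by
  simp only [caraValue, θ₀, θ₁, θ₂, sub_self]
  ring_nf

end ABM

theorem stmt_11_general (T A k γ η b σ : ℝ) (hA : 0 < A) (hk : 0 < k)
    (hγ : 0 < γ)
    (θ₁ : ℝ → ℝ → ℝ) (hθ₁ : ∀ t s : ℝ, θ₁ t s = s + b * (T - t))
    (θ₂ θ₀ : ℝ → ℝ)
    (hθ₂ : ∀ t : ℝ, θ₂ t = -η - γ * σ ^ 2 / 2 * (T - t))
    (hθ₀ : ∀ t : ℝ, θ₀ t
      = 2 * A / (k + γ) * (1 - k / γ * Real.log (1 + γ / k) - k * η) * (T - t)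
        - k * γ * A / (k + γ) * σ ^ 2 * (T - t) ^ 2 / 2)
    (u : ℝ → ℝ → ℤ → ℝ → ℝ)
    (hu : ∀ (t s : ℝ) (q : ℤ) (x : ℝ),
      u t s q x
        = -Real.exp (-(γ * (x + θ₀ t + (q : ℝ) * θ₁ t s + (q : ℝ) ^ 2 * θ₂ t)))) :
    -- (i) `θ₁` solves the backward PDE, `θ₁(T,s) = s` and `∂ₛθ₁ ≡ 1`
    (∀ t s : ℝ,
      deriv (fun τ => θ₁ τ s) t + b * deriv (fun y => θ₁ t y) s
          + σ ^ 2 / 2 * deriv (deriv (fun y => θ₁ t y)) s = 0 ∧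
        θ₁ T s = s ∧ deriv (fun y => θ₁ t y) s = 1) ∧
    -- (ii)–(iii)
    (∀ t ∈ Set.Icc (0 : ℝ) T, ∀ (s : ℝ) (q : ℤ) (x : ℝ),
      ∀ δp δm : ℝ,
        δp = 1 / γ * Real.log (1 + γ / k) + η + γ * σ ^ 2 / 2 * (T - t)
          + (b * (T - t) - (q : ℝ) * (2 * η + γ * σ ^ 2 * (T - t))) →
        δm = 1 / γ * Real.log (1 + γ / k) + η + γ * σ ^ 2 / 2 * (T - t)
          - (b * (T - t) - (q : ℝ) * (2 * η + γ * σ ^ 2 * (T - t))) →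
          -- the ask functional attains its supremum at the unique point `δ⁺*`
          (∀ δ : ℝ, δ ≠ δp →
            A * Real.exp (-(k * δ)) * (u t s (q - 1) (x + s + δ) - u t s q x)
              < A * Real.exp (-(k * δp)) * (u t s (q - 1) (x + s + δp) - u t s q x)) ∧
          -- the bid functional attains its supremum at the unique point `δ⁻*`
          (∀ δ : ℝ, δ ≠ δm →
            A * Real.exp (-(k * δ)) * (u t s (q + 1) (x - s + δ) - u t s q x)
              < A * Real.exp (-(k * δm)) * (u t s (q + 1) (x - s + δm) - u t s q x)) ∧
          -- optimal spread and indifference price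
          δp + δm = 2 / γ * Real.log (1 + γ / k) + 2 * η + γ * σ ^ 2 * (T - t) ∧
          s + (δp - δm) / 2
            = s + b * (T - t) - (q : ℝ) * (2 * η + γ * σ ^ 2 * (T - t))) ∧
    -- (iv) subsolution property and terminal condition
    (∀ t ∈ Set.Icc (0 : ℝ) T, ∀ (s : ℝ) (q : ℤ) (x : ℝ),
      0 ≤ HJB A k (fun _ _ => b) (fun _ _ => σ) u t s q x) ∧
    (∀ (s : ℝ) (q : ℤ) (x : ℝ),
      u T s q x = -Real.exp (-(γ * (x + (q : ℝ) * s - η * (q : ℝ) ^ 2)))) := by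
  obtain rfl : θ₁ = ABM.θ₁ T b := funext₂ hθ₁
  obtain rfl : θ₂ = ABM.θ₂ T γ η σ := funext hθ₂
  obtain rfl : θ₀ = ABM.θ₀ T A k γ η σ := funext hθ₀
  obtain rfl : u = caraValue γ (ABM.θ₀ T A k γ η σ) (ABM.θ₁ T b) (ABM.θ₂ T γ η σ) := by
    funext t s q x
    exact hu t s q x
  refine ⟨fun t s => ⟨ABM.θ₁_backward_equation t s, by simp [ABM.θ₁],
      (ABM.hasDerivAt_θ₁_space t s).deriv⟩,
    fun t _ s q x δp δm hδp hδm => ?_,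
    fun t _ s q x => ABM.HJB_caraValue_nonneg hA hk hγ t s q x,
    fun s q x => ABM.caraValue_terminal s q x⟩
  obtain rfl : δp = ABM.askQuote T k γ η b σ t q := hδp
  obtain rfl : δm = ABM.bidQuote T k γ η b σ t q := hδm
  exact ⟨fun _ => ABM.askGain_caraValue_lt_askQuote hA hk hγ,
    fun _ => ABM.bidGain_caraValue_lt_bidQuote hA hk hγ, ABM.askQuote_add_bidQuote t q,
    by simp only [ABM.askQuote, ABM.bidQuote]; ring⟩

/-- Arithmetic-Brownian-motion example of Theorem 4 (exponential utility, risk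
aversion `γ`, inventory penalty `η`, mid-price `dS = b dt + σ dW`): with the
explicit `θ₁, θ₂, θ₀` and `u̲ = −exp(−γ(x + θ₀ + qθ₁ + q²θ₂))`, (i) `θ₁` solves
the backward PDE with terminal datum `s` and `∂ₛθ₁ ≡ 1`; (ii)–(iii) the ask/bid
functionals attain their suprema at the unique points `δ±*`, giving the stated
optimal spread and indifference price; (iv) `HJB(u̲) ≥ 0` with the exponential
terminal condition. -/
theorem stmt_11 (T A k γ η b σ : ℝ) (hT : 0 < T) (hA : 0 < A) (hk : 0 < k)
    (hγ : 0 < γ) (hη : 0 ≤ η)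
    (θ₁ : ℝ → ℝ → ℝ) (hθ₁ : ∀ t s : ℝ, θ₁ t s = s + b * (T - t))
    (θ₂ θ₀ : ℝ → ℝ)
    (hθ₂ : ∀ t : ℝ, θ₂ t = -η - γ * σ ^ 2 / 2 * (T - t))
    (hθ₀ : ∀ t : ℝ, θ₀ t
      = 2 * A / (k + γ) * (1 - k / γ * Real.log (1 + γ / k) - k * η) * (T - t)
        - k * γ * A / (k + γ) * σ ^ 2 * (T - t) ^ 2 / 2)
    (u : ℝ → ℝ → ℤ → ℝ → ℝ)
    (hu : ∀ (t s : ℝ) (q : ℤ) (x : ℝ),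
      u t s q x
        = -Real.exp (-(γ * (x + θ₀ t + (q : ℝ) * θ₁ t s + (q : ℝ) ^ 2 * θ₂ t)))) :
    -- (i) `θ₁` solves the backward PDE, `θ₁(T,s) = s` and `∂ₛθ₁ ≡ 1`
    (∀ t s : ℝ,
      deriv (fun τ => θ₁ τ s) t + b * deriv (fun y => θ₁ t y) s
          + σ ^ 2 / 2 * deriv (deriv (fun y => θ₁ t y)) s = 0 ∧
        θ₁ T s = s ∧ deriv (fun y => θ₁ t y) s = 1) ∧
    -- (ii)–(iii)
    (∀ t ∈ Set.Icc (0 : ℝ) T, ∀ (s : ℝ) (q : ℤ) (x : ℝ),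
      ∀ δp δm : ℝ,
        δp = 1 / γ * Real.log (1 + γ / k) + η + γ * σ ^ 2 / 2 * (T - t)
          + (b * (T - t) - (q : ℝ) * (2 * η + γ * σ ^ 2 * (T - t))) →
        δm = 1 / γ * Real.log (1 + γ / k) + η + γ * σ ^ 2 / 2 * (T - t)
          - (b * (T - t) - (q : ℝ) * (2 * η + γ * σ ^ 2 * (T - t))) →
          -- the ask functional attains its supremum at the unique point `δ⁺*`
          (∀ δ : ℝ, δ ≠ δp →
            A * Real.exp (-(k * δ)) * (u t s (q - 1) (x + s + δ) - u t s q x)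
              < A * Real.exp (-(k * δp)) * (u t s (q - 1) (x + s + δp) - u t s q x)) ∧
          -- the bid functional attains its supremum at the unique point `δ⁻*`
          (∀ δ : ℝ, δ ≠ δm →
            A * Real.exp (-(k * δ)) * (u t s (q + 1) (x - s + δ) - u t s q x)
              < A * Real.exp (-(k * δm)) * (u t s (q + 1) (x - s + δm) - u t s q x)) ∧
          -- optimal spread and indifference price
          δp + δm = 2 / γ * Real.log (1 + γ / k) + 2 * η + γ * σ ^ 2 * (T - t) ∧
          s + (δp - δm) / 2
            = s + b * (T - t) - (q : ℝ) * (2 * η + γ * σ ^ 2 * (T - t))) ∧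
    -- (iv) subsolution property and terminal condition
    (∀ t ∈ Set.Icc (0 : ℝ) T, ∀ (s : ℝ) (q : ℤ) (x : ℝ),
      0 ≤ HJB A k (fun _ _ => b) (fun _ _ => σ) u t s q x) ∧
    (∀ (s : ℝ) (q : ℤ) (x : ℝ),
      u T s q x = -Real.exp (-(γ * (x + (q : ℝ) * s - η * (q : ℝ) ^ 2)))) :=
  stmt_11_general T A k γ η b σ hA hk hγ θ₁ hθ₁ θ₂ θ₀ hθ₂ hθ₀ u hu
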